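/- For the 4×4 Kunisky matrix C = (1/√3)·[[1,1,1,0],[1,1,-1,0],[1,-1,0,1],[1,-1,0,-1]], every x ∈ {-1,1}⁴ satisfies ‖Cx‖_∞ = √3, hence β(C) = √3. -/

import Mathlib

open Matrix Finset

/-- The ±1 vector associated to a Boolean sign pattern. -/
noncomputable def signVec {n : ℕ} (σ : Fin n → Bool) : Fin n → ℝ :=
  fun i => if σ i then 1 else -1

/-- The ℓ^∞ norm (maximum absolute coordinate) of a vector. -/
noncomputable def supNorm {n : ℕ} (v : Fin n → ℝ) : ℝ := ⨆ i, |v i|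

/-- β(A) = 2^{-n} Σ_{x ∈ {-1,1}^n} ‖Ax‖_∞. -/
noncomputable def beta {n : ℕ} (A : Matrix (Fin n) (Fin n) ℝ) : ℝ :=
  (2 ^ n : ℝ)⁻¹ * ∑ σ : Fin n → Bool, supNorm (A.mulVec (signVec σ))

noncomputable def C4 : Matrix (Fin 4) (Fin 4) ℝ :=
  (Real.sqrt 3)⁻¹ • !![1, 1, 1, 0; 1, 1, -1, 0; 1, -1, 0, 1; 1, -1, 0, -1]

lemma sup4 (v : Fin 4 → ℝ) : supNorm v = |v 0| ⊔ |v 1| ⊔ |v 2| ⊔ |v 3| := by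
  apply le_antisymm
  · apply ciSup_le
    intro i
    fin_cases i <;> simp [le_sup_left, le_sup_right, le_max_iff, le_refl, le_sup_iff]
  · have h : ∀ i, |v i| ≤ supNorm v := fun i =>
      le_ciSup (f := fun i => |v i|) (Set.Finite.bddAbove (Set.finite_range _)) i
    simp only [sup_le_iff]
    exact ⟨⟨⟨h 0, h 1⟩, h 2⟩, h 3⟩

lemma kunisky_key (σ : Fin 4 → Bool) :
    supNorm (C4.mulVec (signVec σ)) = Real.sqrt 3 := by
  have hs : (0:ℝ) < Real.sqrt 3 := Real.sqrt_pos.2 (by norm_num)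
  have hmul : Real.sqrt 3 * Real.sqrt 3 = 3 := Real.mul_self_sqrt (by norm_num)
  have h3 : (Real.sqrt 3)⁻¹ * 3 = Real.sqrt 3 := by field_simp; linear_combination -hmul
  have h1 : (Real.sqrt 3)⁻¹ ≤ Real.sqrt 3 := by nlinarith [inv_pos.2 hs]
  have kpos : |(Real.sqrt 3)⁻¹ + (Real.sqrt 3)⁻¹ + (Real.sqrt 3)⁻¹| = Real.sqrt 3 := by
    rw [abs_of_nonneg (by positivity)]; linarith [h3]
  have kneg : |-(Real.sqrt 3)⁻¹ + -(Real.sqrt 3)⁻¹ + -(Real.sqrt 3)⁻¹| = Real.sqrt 3 := by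
    have h : -(Real.sqrt 3)⁻¹ + -(Real.sqrt 3)⁻¹ + -(Real.sqrt 3)⁻¹
        = -((Real.sqrt 3)⁻¹ + (Real.sqrt 3)⁻¹ + (Real.sqrt 3)⁻¹) := by ring
    rw [h, abs_neg, kpos]
  rw [sup4]
  cases h0 : σ 0 <;> cases h1' : σ 1 <;> cases h2 : σ 2 <;> cases h3' : σ 3 <;>
    simp [C4, signVec, Matrix.mulVec, dotProduct, Fin.sum_univ_four, h0, h1', h2, h3',
      abs_mul, abs_inv, abs_of_nonneg hs.le] <;>
    simp [kpos, kneg, h1, sup_eq_left, sup_eq_right]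

theorem bad_science_n4_kunisky :
    (∀ σ : Fin 4 → Bool, supNorm (C4.mulVec (signVec σ)) = Real.sqrt 3) ∧
    beta C4 = Real.sqrt 3 := by
  refine ⟨kunisky_key, ?_⟩
  unfold beta
  simp only [kunisky_key, Finset.sum_const, Finset.card_univ, nsmul_eq_mul]
  have hcard : (Fintype.card (Fin 4 → Bool) : ℝ) = 16 := by
    simp [Fintype.card_fun]
  rw [hcard]
  ring
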